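/- If a well-defined derivation under the rollback semantics never applies the Check rule (so every process's active checkpoint set remains empty throughout, no history items are recorded, and the Commit, Delay, and Rollback rules are never enabled), then projecting the derivation by sta yields a derivation under the standard semantics of exactly the same length, with each rollback step mapping to a standard step of the same label. -/

import Mathlib

abbrev Pid := ℕ
abbrev Tag := ℕ
abbrev Ckpt := ℕ
abbrev Val := ℕ

/-- Local (process-level) semantics, given as abstract relations on states. -/
structure LocalSem (State : Type) where
  seqS : State → State → Prop
  sendS : State → Pid → Val → State → Prop
  recS : State → Val → State → Prop
  spawnS : State → State → Pid → State → Prop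
  checkS : State → Ckpt → State → Prop
  commitS : State → Ckpt → State → Prop
  rollbackS : State → Ckpt → State → Prop

/- ---------- Standard semantics ---------- -/

inductive SComp (State : Type) where
  | proc : Pid → State → SComp State
  | msg : Pid → Pid → Val → SComp State

/-- A system: parallel composition modulo associativity/commutativity = multiset. -/
abbrev SSys (State : Type) := Multiset (SComp State)

def sids {State : Type} : SComp State → Finset Pid
  | .proc p _ => {p}
  | .msg p p' _ => {p, p'}

/-- The set of pids occurring in a system. -/
def idsS {State : Type} (S : SSys State) : Finset Pid := (S.map sids).sup

inductive SLabel where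
  | seq : Pid → SLabel
  | send : Pid → SLabel
  | recv : Pid → SLabel
  | spawn : Pid → Pid → SLabel
deriving DecidableEq

inductive SStep {State : Type} (L : LocalSem State) : SSys State → SLabel → SSys State → Prop where
  | seq {p s s'} : L.seqS s s' →
      SStep L {SComp.proc p s} (.seq p) {SComp.proc p s'}
  | send {p p' v s s'} : L.sendS s p' v s' →
      SStep L {SComp.proc p s} (.send p) {SComp.msg p p' v, SComp.proc p s'}
  | recv {p p' v s s'} : L.recS s v s' →
      SStep L {SComp.msg p' p v, SComp.proc p s} (.recv p) {SComp.proc p s'}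
  | spawn {p p' s s₀ s'} : L.spawnS s s₀ p' s' → p' ≠ p →
      SStep L {SComp.proc p s} (.spawn p p') {SComp.proc p s', SComp.proc p' s₀}
  | par {S₁ l S₁' S₂} : SStep L S₁ l S₁' → Disjoint (idsS S₁') (idsS S₂) →
      SStep L (S₁ + S₂) l (S₁' + S₂)

/- ---------- Histories ---------- -/

inductive Item (State : Type) where
  | seq : State → Item State
  | send : State → Pid → Tag → Item State
  | recv : Finset Ckpt → Finset Ckpt → State → Pid → Tag → Val → Item State
  | spawn : State → Pid → Item State
  | check : Ckpt → State → Item State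
  | commit : Ckpt → State → Item State
deriving DecidableEq

abbrev Hist (State : Type) := List (Item State)

abbrev Delayed (State : Type) := Ckpt × Hist State × Finset Pid

def addC {State : Type} (C : Finset Ckpt) (a : Item State) (h : Hist State) : Hist State :=
  if C = ∅ then h else a :: h

/-- last_τ(h): the first check/rec item in h is check(τ,·) or a rec item whose
    forced-checkpoint set contains τ. -/
def lastCk {State : Type} (τ : Ckpt) : Hist State → Prop
  | [] => False
  | .check τ' _ :: _ => τ' = τ
  | .recv C _ _ _ _ _ :: _ => τ ∈ C
  | _ :: h => lastCk τ h

def itemDp {State : Type} : Item State → Finset Pid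
  | .send _ p _ => {p}
  | .spawn _ p => {p}
  | _ => ∅

/-- dp_τ(h): the pids causally dependent on the process according to its history. -/
def dpH {State : Type} (h : Hist State) : Finset Pid := (h.map itemDp).foldr (· ∪ ·) ∅

/- ---------- Rollback systems ---------- -/

inductive RComp (State : Type) [DecidableEq State] where
  | fwd : Finset Ckpt → Finset (Delayed State) → Hist State → Pid → State → RComp State
  | bwd : Finset Ckpt → Finset (Delayed State) → Hist State → Pid → State → Ckpt → RComp State
  | msg : Finset Ckpt → Pid → Pid → Tag → Val → RComp State

abbrev RSys (State : Type) [DecidableEq State] := Multiset (RComp State)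

variable {State : Type} [DecidableEq State]

/-- Remove τ from the active checkpoint set of a component. -/
def eraseCk (τ : Ckpt) : RComp State → RComp State
  | .fwd C D h p s => .fwd (C.erase τ) D h p s
  | .bwd C D h p s τ' => .bwd (C.erase τ) D h p s τ'
  | .msg C p p' l v => .msg (C.erase τ) p p' l v

/-- Commit propagation: each component of the system either stays unchanged or has
    τ removed from its active checkpoint set. -/
def RemTau (τ : Ckpt) (S S' : RSys State) : Prop :=
  Multiset.Rel (fun c c' => c' = c ∨ c' = eraseCk τ c) S S'

def itemTags : Item State → Finset Tag
  | .send _ _ l => {l}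
  | .recv _ _ _ _ l _ => {l}
  | _ => ∅

def itemCks : Item State → Finset Ckpt
  | .recv C C' _ _ _ _ => C ∪ C'
  | .check τ _ => {τ}
  | .commit τ _ => {τ}
  | _ => ∅

def histTags (h : Hist State) : Finset Tag := (h.map itemTags).foldr (· ∪ ·) ∅
def histCks (h : Hist State) : Finset Ckpt := (h.map itemCks).foldr (· ∪ ·) ∅

def compTags : RComp State → Finset Tag
  | .fwd _ _ h _ _ => histTags h
  | .bwd _ _ h _ _ _ => histTags h
  | .msg _ _ _ l _ => {l}

def compCks : RComp State → Finset Ckpt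
  | .fwd C D h _ _ => C ∪ histCks h ∪ D.image (·.1)
  | .bwd C D h _ _ τ => C ∪ histCks h ∪ D.image (·.1) ∪ {τ}
  | .msg C _ _ _ _ => C

def compPids : RComp State → Finset Pid
  | .fwd _ _ h p _ => insert p (dpH h)
  | .bwd _ _ h p _ _ => insert p (dpH h)
  | .msg _ p p' _ _ => {p, p'}

def sysTags (S : RSys State) : Finset Tag := (S.map compTags).sup
def sysCks (S : RSys State) : Finset Ckpt := (S.map compCks).sup
def sysPids (S : RSys State) : Finset Pid := (S.map compPids).sup

inductive RLabel where
  | seq : Pid → RLabel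
  | send : Pid → Tag → RLabel
  | recv : Pid → Tag → RLabel
  | spawn : Pid → Pid → RLabel
  | check : Pid → Ckpt → RLabel
  | commit : Pid → Ckpt → RLabel
  | delay : Pid → Ckpt → RLabel
  | rollback : Pid → Ckpt → RLabel
  | bseq : Pid → RLabel
  | bsend : Pid → Tag → RLabel
  | brec : Pid → Tag → RLabel
  | bspawn : Pid → Pid → RLabel
  | bcheck : Pid → Ckpt → RLabel
  | bcommit : Pid → Ckpt → RLabel
  | flip : Pid → RLabel      -- propagation of the rollback mode (silent steps)
deriving DecidableEq

/-- The rollback semantics: forward rules (Fig. 4) and backward rules (Fig. 5). -/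
inductive RStep (L : LocalSem State) : RSys State → RLabel → RSys State → Prop where
  -- forward rules
  | seq {C D h p s s'} : L.seqS s s' →
      RStep L {RComp.fwd C D h p s} (.seq p)
        {RComp.fwd C D (addC C (.seq s) h) p s'}
  | send {C D h p p' v s s'} (l : Tag) : L.sendS s p' v s' → l ∉ histTags h →
      RStep L {RComp.fwd C D h p s} (.send p l)
        {RComp.msg C p p' l v, RComp.fwd C D (addC C (.send s p' l) h) p s'}
  | recv {C C' D h p p' l v s s'} : L.recS s v s' →
      RStep L {RComp.msg C' p' p l v, RComp.fwd C D h p s} (.recv p l)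
        {RComp.fwd (C ∪ C') D (addC C (.recv (C' \ C) C' s p' l v) h) p s'}
  | spawn {C D h p p' s s₀ s'} : L.spawnS s s₀ p' s' → p' ≠ p →
      RStep L {RComp.fwd C D h p s} (.spawn p p')
        {RComp.fwd C D (addC C (.spawn s p') h) p s', RComp.fwd C ∅ [] p' s₀}
  | check {C D h p s s' τ} : L.checkS s τ s' → τ ∉ C →
      RStep L {RComp.fwd C D h p s} (.check p τ)
        {RComp.fwd (insert τ C) D (.check τ s :: h) p s'}
  | commit {C D h p s s' τ Rest Rest'} : L.commitS s τ s' → lastCk τ h → RemTau τ Rest Rest' →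
      RStep L ({RComp.fwd C D h p s} + Rest) (.commit p τ)
        ({RComp.fwd (C.erase τ) D (.commit τ s :: h) p s'} + Rest')
  | commitDelay {C D h p s s' τ} : L.commitS s τ s' → ¬ lastCk τ h →
      RStep L {RComp.fwd C D h p s} (.delay p τ)
        {RComp.fwd (C.erase τ) (insert (τ, h, dpH h) D) (.commit τ s :: h) p s'}
  | delay {C D h p s τ h' P Rest Rest'} : (τ, h', P) ∈ D → lastCk τ h' → RemTau τ Rest Rest' →
      RStep L ({RComp.fwd C D h p s} + Rest) (.delay p τ)
        ({RComp.fwd C (D.erase (τ, h', P)) h p s} + Rest')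
  | rollback {C D h p s s' τ} : L.rollbackS s τ s' →
      RStep L {RComp.fwd C D h p s} (.rollback p τ) {RComp.bwd C D h p s' τ}
  -- backward rules
  | bseq {C D h p s s' τ} : τ ∈ C →
      RStep L {RComp.bwd C D (.seq s :: h) p s' τ} (.bseq p) {RComp.bwd C D h p s τ}
  | bsend1 {C D h p p' l v s s' τ} : τ ∈ C →
      RStep L {RComp.msg C p p' l v, RComp.bwd C D (.send s p' l :: h) p s' τ}
        (.bsend p l) {RComp.bwd C D h p s τ}
  | bsend2 {C D h p p' l s s' τ C' D' h' s''} : τ ∈ C →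
      (∃ C₁ C₂ s₁ v, Item.recv C₁ C₂ s₁ p l v ∈ h') →   -- the message was received
      RStep L {RComp.bwd C D (.send s p' l :: h) p s' τ, RComp.fwd C' D' h' p' s''}
        (.flip p')
        {RComp.bwd C D (.send s p' l :: h) p s' τ, RComp.bwd C' D' h' p' s'' τ}
  | brec1 {C C' C'' D h p p' l v s s' τ} : τ ∈ C ∪ C' → τ ∈ C'' →
      RStep L {RComp.bwd (C ∪ C') D (.recv C'' C' s p' l v :: h) p s' τ} (.brec p l)
        {RComp.msg C' p' p l v, RComp.fwd C D h p s}
  | brec2 {C C' C'' D h p p' l v s s' τ} : τ ∈ C ∪ C' → τ ∉ C'' →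
      RStep L {RComp.bwd (C ∪ C') D (.recv C'' C' s p' l v :: h) p s' τ} (.brec p l)
        {RComp.msg C' p' p l v, RComp.bwd C D h p s τ}
  | bspawn1 {C D h p p' s s' s₀ τ} : τ ∈ C →
      RStep L {RComp.bwd C D (.spawn s p' :: h) p s' τ, RComp.bwd C ∅ [] p' s₀ τ}
        (.bspawn p p') {RComp.bwd C D h p s τ}
  | bspawn2 {C D h p p' s s' τ C' D' h' s''} : τ ∈ C →
      RStep L {RComp.bwd C D (.spawn s p' :: h) p s' τ, RComp.fwd C' D' h' p' s''}
        (.flip p')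
        {RComp.bwd C D (.spawn s p' :: h) p s' τ, RComp.bwd C' D' h' p' s'' τ}
  | bcheck1 {C D h p s s' τ} :
      RStep L {RComp.bwd C D (.check τ s :: h) p s' τ} (.bcheck p τ)
        {RComp.fwd (C.erase τ) D h p s}
  | bcheck2 {C D h p s s' τ τ'} : τ ≠ τ' → τ ∈ C →
      RStep L {RComp.bwd C D (.check τ' s :: h) p s' τ} (.bcheck p τ')
        {RComp.bwd (C.erase τ') D h p s τ}
  | bcommit1 {C D h p s s' τ τ'} : τ ∈ C → (∀ h' P, (τ', h', P) ∉ D) →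
      RStep L {RComp.bwd C D (.commit τ' s :: h) p s' τ} (.bcommit p τ')
        {RComp.bwd (insert τ' C) D h p s τ}
  | bcommit2 {C D h p s s' τ τ' h' P} : τ ∈ C → (τ', h', P) ∈ D →
      RStep L {RComp.bwd C D (.commit τ' s :: h) p s' τ} (.bcommit p τ')
        {RComp.bwd (insert τ' C) (D.erase (τ', h', P)) h p s τ}
  -- lifting to larger systems
  | par {S₁ l S₁' S₂} : RStep L S₁ l S₁' →
      Disjoint (sysPids S₁') (sysPids S₂) → Disjoint (sysTags S₁') (sysTags S₂) →
      Disjoint (sysCks S₁') (sysCks S₂) →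
      RStep L (S₁ + S₂) l (S₁' + S₂)

/- ---------- Uncontrolled reversible semantics (appendix) ---------- -/

inductive VItem (State : Type) where
  | seq : State → VItem State
  | send : State → Pid → Tag → VItem State
  | recv : State → Pid → Tag → Val → VItem State
  | spawn : State → Pid → VItem State

inductive VComp (State : Type) where
  | proc : List (VItem State) → Pid → State → VComp State
  | msg : Pid → Pid → Tag → Val → VComp State

abbrev VSys (State : Type) := Multiset (VComp State)

/-- The uncontrolled reversible semantics ⇌ = ⇀ ∪ ↽. -/
inductive VStep (L : LocalSem State) : VSys State → VSys State → Prop where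
  | seq {h p s s'} : L.seqS s s' →
      VStep L {VComp.proc h p s} {VComp.proc (.seq s :: h) p s'}
  | send {h p p' l v s s'} : L.sendS s p' v s' →
      VStep L {VComp.proc h p s} {VComp.msg p p' l v, VComp.proc (.send s p' l :: h) p s'}
  | recv {h p p' l v s s'} : L.recS s v s' →
      VStep L {VComp.msg p' p l v, VComp.proc h p s} {VComp.proc (.recv s p' l v :: h) p s'}
  | spawn {h p p' s s₀ s'} : L.spawnS s s₀ p' s' → p' ≠ p →
      VStep L {VComp.proc h p s} {VComp.proc (.spawn s p' :: h) p s', VComp.proc [] p' s₀}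
  | bseq {h p s s'} :
      VStep L {VComp.proc (.seq s :: h) p s'} {VComp.proc h p s}
  | bsend {h p p' l v s s'} :
      VStep L {VComp.msg p p' l v, VComp.proc (.send s p' l :: h) p s'} {VComp.proc h p s}
  | brec {h p p' l v s s'} :
      VStep L {VComp.proc (.recv s p' l v :: h) p s'} {VComp.msg p' p l v, VComp.proc h p s}
  | bspawn {h p p' s s₀ s'} :
      VStep L {VComp.proc (.spawn s p' :: h) p s', VComp.proc [] p' s₀} {VComp.proc h p s}
  | par {S₁ S₁' S₂} : VStep L S₁ S₁' → VStep L (S₁ + S₂) (S₁' + S₂)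

/- ---------- Projections ---------- -/

/-- History cleaning: drop check/commit items, keep the rest (dropping the
    checkpoint sets of rec items). -/
def rclean : Hist State → List (VItem State)
  | [] => []
  | .seq s :: h => .seq s :: rclean h
  | .send s p l :: h => .send s p l :: rclean h
  | .recv _ _ s p l v :: h => .recv s p l v :: rclean h
  | .spawn s p :: h => .spawn s p :: rclean h
  | .check _ _ :: h => rclean h
  | .commit _ _ :: h => rclean h

/-- Projection to the standard semantics; `sbar` is the operation s ↦ s̄ that replaces
    the rollback operators and checkpoint identifiers in a state by `ok`. -/
def staComp (sbar : State → State) : RComp State → SComp State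
  | .fwd _ _ _ p s => .proc p (sbar s)
  | .bwd _ _ _ p s _ => .proc p (sbar s)
  | .msg _ p p' _ v => .msg p p' v

def sta (sbar : State → State) (S : RSys State) : SSys State := S.map (staComp sbar)

/-- Projection to the reversible semantics. -/
def revComp (sbar : State → State) : RComp State → VComp State
  | .fwd _ _ h p s => .proc (rclean h) p (sbar s)
  | .bwd _ _ h p s _ => .proc (rclean h) p (sbar s)
  | .msg _ p p' l v => .msg p p' l v

def revP (sbar : State → State) (S : RSys State) : VSys State := S.map (revComp sbar)

/-- Compatibility of the state projection s̄ with the local semantics: local steps of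
    the four standard actions are preserved, and the rollback-operator steps leave
    s̄ unchanged (they only manipulate operators erased by the projection). -/
structure EraseOk (L : LocalSem State) (sbar : State → State) : Prop where
  seq : ∀ {s s'}, L.seqS s s' → L.seqS (sbar s) (sbar s')
  send : ∀ {s p v s'}, L.sendS s p v s' → L.sendS (sbar s) p v (sbar s')
  recvC : ∀ {s v s'}, L.recS s v s' → L.recS (sbar s) v (sbar s')
  spawn : ∀ {s s₀ p s'}, L.spawnS s s₀ p s' → L.spawnS (sbar s) (sbar s₀) p (sbar s')
  check : ∀ {s τ s'}, L.checkS s τ s' → sbar s' = sbar s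
  commit : ∀ {s τ s'}, L.commitS s τ s' → sbar s' = sbar s
  rollback : ∀ {s τ s'}, L.rollbackS s τ s' → sbar s' = sbar s

/- STATEMENT 19: a well-defined rollback derivation that never applies the Check rule
   projects (via sta) to a standard derivation of exactly the same length, each
   rollback step mapping to a standard step with the same label. -/

/-- Well-definedness of a derivation. -/
def WellDefinedD {State : Type} [DecidableEq State] (L : LocalSem State) (n : ℕ)
    (S : ℕ → RSys State) (lbl : ℕ → RLabel) : Prop :=
  (∃ (p₀ : Pid) (s₀ : State),
      Relation.ReflTransGen (fun A B => ∃ l, RStep L A l B)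
        {RComp.fwd ∅ ∅ [] p₀ s₀} (S 0)) ∧
  (∀ i p τ, i < n → (lbl i = .commit p τ ∨ lbl i = .delay p τ) →
      ∃ j < i, lbl j = .check p τ) ∧
  (∀ i p τ, i < n → lbl i = .rollback p τ → ∃ j < i, lbl j = .check p τ) ∧
  (∀ i j p τ, i < n → j < n → ¬(lbl i = .commit p τ ∧ lbl j = .rollback p τ))

/-- The standard label corresponding to a rollback-semantics label (for the four
    rules common to both semantics). -/
def toSLabel : RLabel → Option SLabel
  | .seq p => some (.seq p)
  | .send p _ => some (.send p)
  | .recv p _ => some (.recv p)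
  | .spawn p p' => some (.spawn p p')
  | _ => none


/-! Without checkpoints a rollback system is a standard system in disguise: when every
component is a forward process or a message with empty checkpoint set, the forward rules
Seq, Send, Receive, Spawn and Par project under `sta` onto the rules of the same name of
the standard semantics, and produce components of the same shape again. The Check rule
is excluded by hypothesis, and well-definedness then excludes Commit, Delay and Rollback,
which need an earlier Check; the backward rules need a process in rollback mode, which
never appears. -/

def RComp.CheckpointFree : RComp State → Prop
  | .fwd C _ _ _ _ => C = ∅
  | .bwd .. => False
  | .msg C _ _ _ _ => C = ∅

def CheckpointFree (S : RSys State) : Prop := ∀ c ∈ S, c.CheckpointFree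

def RLabel.IsCheckpointOp : RLabel → Prop
  | .check .. | .commit .. | .delay .. | .rollback .. => True
  | _ => False

theorem checkpointFree_add {S₁ S₂ : RSys State} :
    CheckpointFree (S₁ + S₂) ↔ CheckpointFree S₁ ∧ CheckpointFree S₂ := by
  simp only [CheckpointFree, Multiset.mem_add, or_imp, forall_and]

theorem sta_add (sbar : State → State) (S₁ S₂ : RSys State) :
    sta sbar (S₁ + S₂) = sta sbar S₁ + sta sbar S₂ :=
  Multiset.map_add _ _ _

theorem idsS_sta_subset (sbar : State → State) (S : RSys State) :
    idsS (sta sbar S) ⊆ sysPids S := by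
  rw [idsS, sta, sysPids, Multiset.map_map]
  refine Multiset.sup_le.mpr fun _ hb => ?_
  obtain ⟨c, hc, rfl⟩ := Multiset.mem_map.mp hb
  refine le_trans ?_ (Multiset.le_sup (Multiset.mem_map_of_mem _ hc))
  cases c <;> simp [sids, staComp, compPids]

theorem RStep.checkpointFree_sta {L : LocalSem State} {sbar : State → State}
    (hE : EraseOk L sbar) {S S' : RSys State} {l : RLabel} (hs : RStep L S l S')
    (hS : CheckpointFree S) (hl : ¬ l.IsCheckpointOp) :
    CheckpointFree S' ∧ ∃ sl, toSLabel l = some sl ∧ SStep L (sta sbar S) sl (sta sbar S') := by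
  induction hs with
  | seq hst =>
    obtain rfl := hS _ (Multiset.mem_singleton_self _)
    refine ⟨by simp [CheckpointFree, RComp.CheckpointFree], _, rfl, ?_⟩
    simpa [sta, staComp] using SStep.seq (hE.seq hst)
  | send _ hst _ =>
    obtain rfl := hS _ (Multiset.mem_singleton_self _)
    refine ⟨by simp [CheckpointFree, RComp.CheckpointFree], _, rfl, ?_⟩
    simpa [sta, staComp] using SStep.send (hE.send hst)
  | recv hst =>
    obtain rfl := hS _ (Multiset.mem_cons_self _ _)
    obtain rfl := hS _ (Multiset.mem_cons_of_mem (Multiset.mem_singleton_self _))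
    refine ⟨by simp [CheckpointFree, RComp.CheckpointFree], _, rfl, ?_⟩
    simpa [sta, staComp] using SStep.recv (hE.recvC hst)
  | spawn hst hne =>
    obtain rfl := hS _ (Multiset.mem_singleton_self _)
    refine ⟨by simp [CheckpointFree, RComp.CheckpointFree], _, rfl, ?_⟩
    simpa [sta, staComp] using SStep.spawn (hE.spawn hst) hne
  | check | commit | commitDelay | delay | rollback => exact (hl trivial).elim
  | par _ hpid _ _ ih =>
    obtain ⟨hS₁, hS₂⟩ := checkpointFree_add.mp hS
    obtain ⟨hS₁', sl, hsl, hstep⟩ := ih hS₁ hl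
    refine ⟨checkpointFree_add.mpr ⟨hS₁', hS₂⟩, sl, hsl, ?_⟩
    rw [sta_add, sta_add]
    exact hstep.par (hpid.mono (idsS_sta_subset sbar _) (idsS_sta_subset sbar _))
  | _ => simp_all [CheckpointFree, RComp.CheckpointFree]

theorem not_isCheckpointOp_of_wellDefined {L : LocalSem State} {n : ℕ} {S : ℕ → RSys State}
    {lbl : ℕ → RLabel} (hwd : WellDefinedD L n S lbl)
    (hnocheck : ∀ i < n, ∀ p τ, lbl i ≠ .check p τ) {i : ℕ} (hi : i < n) :
    ¬ (lbl i).IsCheckpointOp := by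
  have no_earlier_check : ∀ p τ, ¬ ∃ j < i, lbl j = .check p τ :=
    fun p τ ⟨j, hj, hchk⟩ => hnocheck j (hj.trans hi) p τ hchk
  cases h : lbl i with
  | check p τ => exact fun _ => hnocheck i hi p τ h
  | commit p τ => exact fun _ => no_earlier_check p τ (hwd.2.1 i p τ hi (.inl h))
  | delay p τ => exact fun _ => no_earlier_check p τ (hwd.2.1 i p τ hi (.inr h))
  | rollback p τ => exact fun _ => no_earlier_check p τ (hwd.2.2.1 i p τ hi h)
  | _ => exact id

theorem checkfree_derivation_projects_bijectively
    {State : Type} [DecidableEq State] (L : LocalSem State) (sbar : State → State)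
    (hE : EraseOk L sbar) (n : ℕ)
    (S : ℕ → RSys State) (lbl : ℕ → RLabel)
    -- the derivation starts from an initial system
    (h0 : ∃ (p : Pid) (s : State), S 0 = {RComp.fwd ∅ ∅ [] p s})
    (hwd : WellDefinedD L n S lbl)
    (hstep : ∀ i < n, RStep L (S i) (lbl i) (S (i + 1)))
    -- the Check rule is never applied
    (hnocheck : ∀ i < n, ∀ p τ, lbl i ≠ .check p τ) :
    -- each of the n steps projects to a standard step with the same label,
    -- giving a standard derivation of exactly the same length n
    ∀ i < n, ∃ l : SLabel, toSLabel (lbl i) = some l ∧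
      SStep L (sta sbar (S i)) l (sta sbar (S (i + 1))) := by
  have projects : ∀ i < n, CheckpointFree (S i) → CheckpointFree (S (i + 1)) ∧
      ∃ l, toSLabel (lbl i) = some l ∧ SStep L (sta sbar (S i)) l (sta sbar (S (i + 1))) :=
    fun i hi hS =>
      (hstep i hi).checkpointFree_sta hE hS (not_isCheckpointOp_of_wellDefined hwd hnocheck hi)
  have invariant : ∀ i ≤ n, CheckpointFree (S i) := by
    intro i
    induction i with
    | zero =>
      obtain ⟨p, s, hS0⟩ := h0
      simp [hS0, CheckpointFree, RComp.CheckpointFree]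
    | succ i ih => exact fun hi => (projects i hi (ih (by omega))).1
  exact fun i hi => (projects i hi (invariant i hi.le)).2
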